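/- arXiv:2002.10888 — 4 statements merged into one kernel-verified Lean document; each statement's English description precedes it below -/
import Mathlib

section
/- Let X be a topological space, S a finite nonempty set with the discrete topology, and (D, G) a partial continuous map on X × S whose topological entropy h(G) is finite. Then for every ε > 0 there exists a natural number N such that for all k ≥ N, the number of admissible sequences of states of length k satisfies |Adm_k| ≤ 2^{k·(h(G)+ε)}. Consequently, the cardinality of the k-th cell decomposition (the family of nonempty cells C[s], s ∈ S^k) obeys the same bound. -/
/- Partial continuous maps, relative preimages, minimal subcovers and the
   entropy sequence `H_k(f, 𝒰)`. -/

noncomputable section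

/-- Relative preimage of `A` under the partial map `(D, f)`:
`f^{-1}(A) = D ∩ f⁻¹(A)`. -/
def relPre {X : Type*} (D : Set X) (f : X → X) (A : Set X) : Set X :=
  D ∩ f ⁻¹' A

/-- Iterated relative preimage: `f^{-0}(A) = A`, `f^{-(i+1)}(A) = f^{-1}(f^{-i}(A))`. -/
def relPreIter {X : Type*} (D : Set X) (f : X → X) : ℕ → Set X → Set X
  | 0, A => A
  | i + 1, A => relPre D f (relPreIter D f i A)

/-- The least cardinality of a subfamily of `V` covering `Y`. -/
def minSubcoverCard {X : Type*} (Y : Set X) (V : Finset (Set X)) : ℕ :=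
  sInf {n | ∃ J : Finset (Set X), J ⊆ V ∧ Y ⊆ ⋃₀ (J : Set (Set X)) ∧ J.card = n}

/-- `H⁰_Y(𝒱)`: log₂ of the least cardinality of a subfamily of `𝒱` covering `Y`. -/
def relH0 {X : Type*} (Y : Set X) (V : Finset (Set X)) : ℝ :=
  Real.logb 2 (minSubcoverCard Y V)

/-- Join of two finite families of subsets: `(U_i ∩ V_j)_{(i,j)}`. -/
def famJoin {X : Type*} (U V : Finset (Set X)) : Finset (Set X) :=
  letI := Classical.decEq (Set X)
  (U ×ˢ V).image fun p => p.1 ∩ p.2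

/-- The family `f^{-i}(𝒰) = (f^{-i}(U_j))_j`. -/
def famPre {X : Type*} (D : Set X) (f : X → X) (i : ℕ) (U : Finset (Set X)) :
    Finset (Set X) :=
  letI := Classical.decEq (Set X)
  U.image (relPreIter D f i)

/-- The family `𝒰 ∨ f^{-1}(𝒰) ∨ ⋯ ∨ f^{-i}(𝒰)`. -/
def joinUpTo {X : Type*} (D : Set X) (f : X → X) (U : Finset (Set X)) :
    ℕ → Finset (Set X)
  | 0 => U
  | i + 1 => famJoin (joinUpTo D f U i) (famPre D f (i + 1) U)

/-- `H_k(f,𝒰) = H⁰_{f^{-(k-1)}(X)}(𝒰 ∨ f^{-1}(𝒰) ∨ ⋯ ∨ f^{-(k-1)}(𝒰))`, for `k ≥ 1`. -/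
def Hseq {X : Type*} (D : Set X) (f : X → X) (U : Finset (Set X)) (k : ℕ) : ℝ :=
  relH0 (relPreIter D f (k - 1) Set.univ) (joinUpTo D f U (k - 1))

/-- The states cover `𝒮 = (X × {s})_{s ∈ S}` of `X × S`. -/
def statesCover (X S : Type*) [Fintype S] : Finset (Set (X × S)) :=
  letI := Classical.decEq (Set (X × S))
  Finset.univ.image fun s : S => (Set.univ : Set X) ×ˢ ({s} : Set S)

/-- The cell `C[s]` of a sequence of states `s = s₁…s_k`: the set of `x ∈ X` such
that for every `1 ≤ i ≤ k`, `(x, s₁) ∈ G^{-(i-1)}(X × S)` and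
`G^{i-1}(x, s₁) ∈ X × {s_i}`. -/
def cell {X S : Type*} (D : Set (X × S)) (G : X × S → X × S) {k : ℕ}
    (s : Fin k → S) : Set X :=
  {x | ∀ i : Fin k,
    (x, s ⟨0, i.pos⟩) ∈ relPreIter D G i.val Set.univ ∧
    (G^[i.val] (x, s ⟨0, i.pos⟩)).2 = s i}
/-- The cover entropy `h(G,𝒰) = lim_{k→∞} H^k(G,𝒰) = inf_{k ≥ 1} H_k(G,𝒰)/k`. -/
def coverEntropy {X : Type*} (D : Set X) (f : X → X) (U : Finset (Set X)) : ℝ :=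
  sInf {x : ℝ | ∃ k : ℕ, 1 ≤ k ∧ x = Hseq D f U k / k}

/-- The topological entropy `h(f) ∈ [0,∞]`: the supremum of the cover entropies
over all finite open covers. -/
def topEntropy {X : Type*} [TopologicalSpace X] (D : Set X) (f : X → X) : EReal :=
  ⨆ (U : Finset (Set X))
    (_ : (∀ V ∈ U, IsOpen V) ∧ ⋃₀ (U : Set (Set X)) = Set.univ),
      (coverEntropy D f U : EReal)

/-- The basic rectangle `⋂_i G^{-i}(X × {t i})` attached to a sequence `t`. -/
def bigW {X S : Type*} (D : Set (X × S)) (G : X × S → X × S) {k : ℕ}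
    (t : Fin k → S) : Set (X × S) :=
  ⋂ i : Fin k, relPreIter D G i.val (Set.univ ×ˢ ({t i} : Set S))


section Aux
variable {Z : Type*} (D : Set Z) (f : Z → Z)

lemma mem_relPreIter_iff (i : ℕ) (A : Set Z) (z : Z) :
    z ∈ relPreIter D f i A ↔ z ∈ relPreIter D f i Set.univ ∧ f^[i] z ∈ A := by
  induction i generalizing A z with
  | zero => simp [relPreIter]
  | succ i ih =>
    simp only [relPreIter, relPre, Set.mem_inter_iff, Set.mem_preimage,
      Function.iterate_succ_apply]
    rw [ih]
    tauto

lemma relPreIter_add (m n : ℕ) (A : Set Z) :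
    relPreIter D f (m + n) A = relPreIter D f m (relPreIter D f n A) := by
  induction m with
  | zero => simp [relPreIter, Nat.zero_add]
  | succ m ih =>
    have h : m + 1 + n = (m + n) + 1 := by omega
    rw [h]
    show relPre D f (relPreIter D f (m + n) A)
        = relPre D f (relPreIter D f m (relPreIter D f n A))
    rw [ih]

lemma relPreIter_antitone {m n : ℕ} (h : m ≤ n) :
    relPreIter D f n Set.univ ⊆ relPreIter D f m Set.univ := by
  intro z hz
  have h1 : n = m + (n - m) := by omega
  rw [h1, relPreIter_add] at hz
  exact ((mem_relPreIter_iff D f m _ z).1 hz).1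

end Aux


section BigW
variable {X S : Type*} (D : Set (X × S)) (G : X × S → X × S)

lemma mem_bigW_iff {k : ℕ} (t : Fin k → S) (z : X × S) :
    z ∈ bigW D G t ↔
      ∀ i : Fin k, z ∈ relPreIter D G i.val Set.univ ∧ (G^[i.val] z).2 = t i := by
  simp only [bigW, Set.mem_iInter]
  constructor
  · intro h i
    have := (mem_relPreIter_iff D G i.val _ z).1 (h i)
    exact ⟨this.1, this.2.2⟩
  · intro h i
    exact (mem_relPreIter_iff D G i.val _ z).2
      ⟨(h i).1, ⟨Set.mem_univ _, (h i).2⟩⟩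

lemma bigW_succ {m : ℕ} (t : Fin (m + 2) → S) :
    bigW D G t = bigW D G (fun i : Fin (m + 1) => t i.castSucc)
      ∩ relPreIter D G (m + 1) (Set.univ ×ˢ ({t (Fin.last (m + 1))} : Set S)) := by
  ext z
  rw [Set.mem_inter_iff, mem_bigW_iff, mem_bigW_iff, Fin.forall_fin_succ']
  simp only [Fin.coe_castSucc, Fin.val_last]
  have h2 : z ∈ relPreIter D G (m + 1) (Set.univ ×ˢ ({t (Fin.last (m + 1))} : Set S))
      ↔ z ∈ relPreIter D G (m + 1) Set.univ ∧ (G^[m + 1] z).2 = t (Fin.last (m + 1)) := by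
    rw [mem_relPreIter_iff]
    constructor
    · rintro ⟨h1, h2⟩; exact ⟨h1, h2.2⟩
    · rintro ⟨h1, h2⟩; exact ⟨h1, Set.mem_univ _, h2⟩
  rw [h2]

lemma mem_statesCover_iff [Fintype S] (V : Set (X × S)) :
    V ∈ statesCover X S ↔ ∃ s : S, V = (Set.univ : Set X) ×ˢ ({s} : Set S) := by
  classical
  simp [statesCover, eq_comm]

lemma bigW_one (t : Fin 1 → S) :
    bigW D G t = (Set.univ : Set X) ×ˢ ({t 0} : Set S) := by
  ext z
  rw [mem_bigW_iff]
  constructor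
  · intro h
    exact ⟨Set.mem_univ _, (h 0).2⟩
  · rintro ⟨-, h2⟩ i
    fin_cases i
    exact ⟨Set.mem_univ z, h2⟩

variable [Fintype S]

lemma joinUpTo_states_subset (m : ℕ) :
    ∀ W ∈ joinUpTo D G (statesCover X S) m, ∃ t : Fin (m + 1) → S, W = bigW D G t := by
  classical
  induction m with
  | zero =>
    intro W hW
    rw [show joinUpTo D G (statesCover X S) 0 = statesCover X S from rfl,
      mem_statesCover_iff] at hW
    obtain ⟨s, rfl⟩ := hW
    exact ⟨fun _ => s, (bigW_one D G fun _ => s).symm⟩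
  | succ m ih =>
    intro W hW
    rw [show joinUpTo D G (statesCover X S) (m + 1)
        = famJoin (joinUpTo D G (statesCover X S) m)
            (famPre D G (m + 1) (statesCover X S)) from rfl] at hW
    simp only [famJoin, famPre, Finset.mem_image, Finset.mem_product, Prod.exists] at hW
    obtain ⟨W₁, W₂, ⟨hW₁, hW₂⟩, rfl⟩ := hW
    obtain ⟨t, rfl⟩ := ih W₁ hW₁
    obtain ⟨V, hV, rfl⟩ := hW₂
    rw [mem_statesCover_iff] at hV
    obtain ⟨s, rfl⟩ := hV
    refine ⟨(Fin.snoc t s : Fin (m + 2) → S), ?_⟩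
    rw [bigW_succ]
    have h1 : (fun i : Fin (m + 1) => (Fin.snoc t s : Fin (m + 2) → S) i.castSucc) = t := by
      funext i; simp [Fin.snoc_castSucc]
    rw [h1, Fin.snoc_last]

lemma bigW_mem_joinUpTo (m : ℕ) (t : Fin (m + 1) → S) :
    bigW D G t ∈ joinUpTo D G (statesCover X S) m := by
  classical
  induction m with
  | zero =>
    rw [bigW_one, show joinUpTo D G (statesCover X S) 0 = statesCover X S from rfl,
      mem_statesCover_iff]
    exact ⟨t 0, rfl⟩
  | succ m ih =>
    rw [bigW_succ,
      show joinUpTo D G (statesCover X S) (m + 1)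
        = famJoin (joinUpTo D G (statesCover X S) m)
            (famPre D G (m + 1) (statesCover X S)) from rfl]
    simp only [famJoin, famPre, Finset.mem_image, Finset.mem_product, Prod.exists]
    refine ⟨bigW D G (fun i : Fin (m + 1) => t i.castSucc),
      relPreIter D G (m + 1) (Set.univ ×ˢ ({t (Fin.last (m + 1))} : Set S)),
      ⟨ih _, ?_⟩, rfl⟩
    exact ⟨_, (mem_statesCover_iff _).2 ⟨t (Fin.last (m + 1)), rfl⟩, rfl⟩

lemma relPreIter_subset_sUnion (m : ℕ) :
    relPreIter D G m Set.univ
      ⊆ ⋃₀ ((joinUpTo D G (statesCover X S) m : Finset (Set (X × S))) : Set (Set (X × S))) := by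
  intro z hz
  refine ⟨bigW D G (fun i : Fin (m + 1) => (G^[i.val] z).2), ?_, ?_⟩
  · exact bigW_mem_joinUpTo D G m _
  · rw [mem_bigW_iff]
    intro i
    exact ⟨relPreIter_antitone D G (by omega : i.val ≤ m) hz, rfl⟩

end BigW


section Cells
variable {X S : Type*} (D : Set (X × S)) (G : X × S → X × S)

lemma eq_of_mem_bigW {k : ℕ} (hk : 0 < k) (s t : Fin k → S) (x : X)
    (hx : x ∈ cell D G s) (hW : (x, s ⟨0, hk⟩) ∈ bigW D G t) : s = t := by
  funext i
  have h1 := (hx i).2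
  have h2 := ((mem_bigW_iff D G t _).1 hW i).2
  exact h1.symm.trans h2

variable [Fintype S]

lemma card_cell_le_two_pow_Hseq (m : ℕ) :
    (Nat.card {s : Fin (m + 1) → S // (cell D G s).Nonempty} : ℝ)
      ≤ 2 ^ Hseq D G (statesCover X S) (m + 1) := by
  classical
  set Y := relPreIter D G m (Set.univ : Set (X × S)) with hYdef
  set V := joinUpTo D G (statesCover X S) m with hVdef
  have hYV : Y ⊆ ⋃₀ (V : Set (Set (X × S))) := relPreIter_subset_sUnion D G m
  have hne : {n | ∃ J : Finset (Set (X × S)), J ⊆ V ∧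
      Y ⊆ ⋃₀ (J : Set (Set (X × S))) ∧ J.card = n}.Nonempty :=
    ⟨V.card, V, subset_rfl, hYV, rfl⟩
  have hmem : ∃ J : Finset (Set (X × S)), J ⊆ V ∧
      Y ⊆ ⋃₀ (J : Set (Set (X × S))) ∧ J.card = minSubcoverCard Y V :=
    Nat.sInf_mem hne
  obtain ⟨J, hJV, hJcov, hJcard⟩ := hmem
  have hkey : Nat.card {s : Fin (m + 1) → S // (cell D G s).Nonempty} ≤ J.card := by
    have hch : ∀ p : {s : Fin (m + 1) → S // (cell D G s).Nonempty},
        ∃ W, W ∈ J ∧ ∃ x, x ∈ cell D G p.1 ∧ (x, p.1 0) ∈ W := by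
      rintro ⟨s, x, hx⟩
      have hY : (x, s 0) ∈ Y := (hx ⟨m, by omega⟩).1
      obtain ⟨W, hWJ, hW⟩ := hJcov hY
      exact ⟨W, hWJ, x, hx, hW⟩
    choose W hWJ x hx hxW using hch
    have hinj : Function.Injective
        (fun p : {s : Fin (m + 1) → S // (cell D G s).Nonempty} =>
          (⟨W p, hWJ p⟩ : {W // W ∈ J})) := by
      intro p q hpq
      have hWW : W p = W q := congrArg Subtype.val hpq
      obtain ⟨t, ht⟩ := joinUpTo_states_subset D G m (W p) (hJV (hWJ p))
      have h1 : p.1 = t :=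
        eq_of_mem_bigW D G (Nat.succ_pos m) p.1 t (x p) (hx p) (ht ▸ hxW p)
      have h2 : q.1 = t :=
        eq_of_mem_bigW D G (Nat.succ_pos m) q.1 t (x q) (hx q)
          ((hWW ▸ ht) ▸ hxW q)
      exact Subtype.ext (h1.trans h2.symm)
    calc Nat.card {s : Fin (m + 1) → S // (cell D G s).Nonempty}
        ≤ Nat.card {W // W ∈ J} := Nat.card_le_card_of_injective _ hinj
      _ = J.card := by rw [Nat.card_eq_fintype_card, Fintype.card_coe]
  have hH : Hseq D G (statesCover X S) (m + 1)
      = Real.logb 2 (minSubcoverCard Y V) := by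
    simp only [Hseq, Nat.add_sub_cancel, relH0, hYdef, hVdef]
  rcases Nat.eq_zero_or_pos J.card with h0 | h0
  · have hz : Nat.card {s : Fin (m + 1) → S // (cell D G s).Nonempty} = 0 :=
      Nat.le_zero.mp (h0 ▸ hkey)
    rw [hz]
    push_cast
    positivity
  · rw [hH, ← hJcard]
    have h2 : (2 : ℝ) ^ Real.logb 2 (J.card : ℝ) = (J.card : ℝ) :=
      Real.rpow_logb two_pos (by norm_num) (by exact_mod_cast h0)
    calc (Nat.card {s : Fin (m + 1) → S // (cell D G s).Nonempty} : ℝ)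
        ≤ (J.card : ℝ) := by exact_mod_cast hkey
      _ = 2 ^ Real.logb 2 (J.card : ℝ) := h2.symm

end Cells


section Entropy
variable {Z : Type*} (D : Set Z) (f : Z → Z) (U : Finset (Set Z))

lemma Hseq_nonneg (k : ℕ) : 0 ≤ Hseq D f U k := by
  unfold Hseq relH0
  rcases Nat.eq_zero_or_pos (minSubcoverCard (relPreIter D f (k - 1) Set.univ)
    (joinUpTo D f U (k - 1))) with h | h
  · rw [h]; simp
  · exact Real.logb_nonneg one_lt_two (by exact_mod_cast h)

lemma coverEntropy_nonneg : 0 ≤ coverEntropy D f U := by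
  refine le_csInf ⟨Hseq D f U 1 / 1, 1, le_refl 1, by norm_num⟩ ?_
  rintro b ⟨k, hk, rfl⟩
  exact div_nonneg (Hseq_nonneg D f U k) (Nat.cast_nonneg k)

lemma exists_good_k {h δ : ℝ} (hco : coverEntropy D f U ≤ h) (hδ : 0 < δ) :
    ∃ k : ℕ, 1 ≤ k ∧ Hseq D f U k ≤ (k : ℝ) * (h + δ) := by
  by_contra hcon
  push_neg at hcon
  have hge : h + δ ≤ coverEntropy D f U := by
    refine le_csInf ⟨Hseq D f U 1 / 1, 1, le_refl 1, by norm_num⟩ ?_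
    rintro b ⟨k, hk, rfl⟩
    have h1 := hcon k hk
    have hk0 : (0 : ℝ) < (k : ℝ) := by exact_mod_cast hk
    rw [le_div_iff₀ hk0]
    nlinarith
  linarith

end Entropy


section Comparison
variable {X S : Type*} [TopologicalSpace X] [TopologicalSpace S] [DiscreteTopology S]
  [Fintype S] (D : Set (X × S)) (G : X × S → X × S)

lemma coverEntropy_states_le_toReal (hfin : topEntropy D G ≠ ⊤) :
    coverEntropy D G (statesCover X S) ≤ (topEntropy D G).toReal := by
  have hcov : (∀ V ∈ statesCover X S, IsOpen V) ∧
      ⋃₀ ((statesCover X S : Finset (Set (X × S))) : Set (Set (X × S))) = Set.univ := by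
    constructor
    · intro V hV
      rw [mem_statesCover_iff] at hV
      obtain ⟨s, rfl⟩ := hV
      exact isOpen_univ.prod (isOpen_discrete _)
    · ext z
      simp only [Set.mem_sUnion, Set.mem_univ, iff_true]
      exact ⟨Set.univ ×ˢ ({z.2} : Set S), (mem_statesCover_iff _).2 ⟨z.2, rfl⟩,
        Set.mem_univ _, rfl⟩
  have hle : ((coverEntropy D G (statesCover X S) : ℝ) : EReal) ≤ topEntropy D G :=
    le_iSup₂ (f := fun (U : Finset (Set (X × S)))
      (_ : (∀ V ∈ U, IsOpen V) ∧ ⋃₀ (U : Set (Set (X × S))) = Set.univ) =>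
        ((coverEntropy D G U : ℝ) : EReal)) (statesCover X S) hcov
  have hbot : topEntropy D G ≠ ⊥ := by
    intro hb
    rw [hb, le_bot_iff] at hle
    exact (EReal.coe_ne_bot _) hle
  rw [← EReal.coe_toReal hfin hbot] at hle
  exact_mod_cast hle

end Comparison


section Submult
variable {X S : Type*} (D : Set (X × S)) (G : X × S → X × S)

lemma cell_prefix {m n : ℕ} (s : Fin (m + n) → S) (x : X) (hx : x ∈ cell D G s) :
    x ∈ cell D G (fun i : Fin m => s (Fin.castAdd n i)) := by
  intro i
  exact hx (Fin.castAdd n i)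

lemma cell_suffix {m n : ℕ} (s : Fin (m + n) → S) (x : X) (hx : x ∈ cell D G s) :
    (cell D G (fun j : Fin n => s (Fin.natAdd m j))).Nonempty := by
  rcases Nat.eq_zero_or_pos n with hn | hn
  · subst hn
    exact ⟨x, fun i => i.elim0⟩
  · have hmn : 0 < m + n := by omega
    have hz2 : (G^[m] (x, s ⟨0, hmn⟩)).2 = s ⟨m, by omega⟩ := (hx ⟨m, by omega⟩).2
    refine ⟨(G^[m] (x, s ⟨0, hmn⟩)).1, ?_⟩
    intro j
    have h0 : s (Fin.natAdd m (⟨0, j.pos⟩ : Fin n)) = (G^[m] (x, s ⟨0, hmn⟩)).2 :=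
      hz2.symm
    have hpair : ((G^[m] (x, s ⟨0, hmn⟩)).1, s (Fin.natAdd m (⟨0, j.pos⟩ : Fin n)))
        = G^[m] (x, s ⟨0, hmn⟩) := by
      rw [h0]
    constructor
    · show ((G^[m] (x, s ⟨0, hmn⟩)).1, s (Fin.natAdd m (⟨0, j.pos⟩ : Fin n)))
        ∈ relPreIter D G j.val Set.univ
      rw [hpair]
      have h1 : (x, s ⟨0, hmn⟩) ∈ relPreIter D G (m + j.val) Set.univ :=
        (hx (Fin.natAdd m j)).1
      rw [relPreIter_add] at h1
      exact ((mem_relPreIter_iff D G m _ _).1 h1).2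
    · show (G^[j.val] ((G^[m] (x, s ⟨0, hmn⟩)).1,
          s (Fin.natAdd m (⟨0, j.pos⟩ : Fin n)))).2 = s (Fin.natAdd m j)
      rw [hpair, ← Function.iterate_add_apply]
      have h2 : (G^[m + j.val] (x, s ⟨0, hmn⟩)).2 = s (Fin.natAdd m j) :=
        (hx (Fin.natAdd m j)).2
      rw [Nat.add_comm m j.val] at h2
      exact h2

/-- The number of admissible sequences of length `k`. -/
def NC (k : ℕ) : ℕ := Nat.card {s : Fin k → S // (cell D G s).Nonempty}

variable [Finite S]

lemma NC_add_le (m n : ℕ) : NC D G (m + n) ≤ NC D G m * NC D G n := by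
  unfold NC
  rw [← Nat.card_prod]
  have hmap : ∀ p : {s : Fin (m + n) → S // (cell D G s).Nonempty},
      (cell D G (fun i : Fin m => p.1 (Fin.castAdd n i))).Nonempty ∧
      (cell D G (fun j : Fin n => p.1 (Fin.natAdd m j))).Nonempty := by
    rintro ⟨s, x, hx⟩
    exact ⟨⟨x, cell_prefix D G s x hx⟩, cell_suffix D G s x hx⟩
  refine Nat.card_le_card_of_injective (fun p =>
    (⟨fun i => p.1 (Fin.castAdd n i), (hmap p).1⟩,
     ⟨fun j => p.1 (Fin.natAdd m j), (hmap p).2⟩)) ?_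
  intro p q hpq
  apply Subtype.ext
  funext i
  refine Fin.addCases (motive := fun i => p.1 i = q.1 i) ?_ ?_ i
  · intro i
    exact congrFun (congrArg Subtype.val (congrArg Prod.fst hpq)) i
  · intro j
    exact congrFun (congrArg Subtype.val (congrArg Prod.snd hpq)) j

lemma NC_mul_le (k₀ r : ℕ) : ∀ q : ℕ, NC D G (q * k₀ + r) ≤ NC D G k₀ ^ q * NC D G r := by
  intro q
  induction q with
  | zero =>
    have h : (0 : ℕ) * k₀ + r = r := by ring
    rw [congrArg (NC D G) h, pow_zero, one_mul]
  | succ q ih =>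
    have h : (q + 1) * k₀ + r = k₀ + (q * k₀ + r) := by ring
    calc NC D G ((q + 1) * k₀ + r) = NC D G (k₀ + (q * k₀ + r)) := congrArg (NC D G) h
      _ ≤ NC D G k₀ * NC D G (q * k₀ + r) := NC_add_le D G _ _
      _ ≤ NC D G k₀ * (NC D G k₀ ^ q * NC D G r) := Nat.mul_le_mul_left _ ih
      _ = NC D G k₀ ^ (q + 1) * NC D G r := by ring

lemma NC_le_pow (r : ℕ) : NC D G r ≤ Nat.card S ^ r := by
  have h := Nat.card_le_card_of_injective
    (Subtype.val : {s : Fin r → S // (cell D G s).Nonempty} → (Fin r → S))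
    Subtype.val_injective
  have h2 : Nat.card (Fin r → S) = Nat.card S ^ r := by rw [Nat.card_fun]; simp
  rw [h2] at h
  exact h

end Submult


section CellsCount
variable {X S : Type*} (D : Set (X × S)) (G : X × S → X × S) [Finite S]

lemma card_cells_le (k : ℕ) :
    Nat.card {C : Set X // ∃ s : Fin k → S, C = cell D G s ∧ C.Nonempty}
      ≤ NC D G k := by
  have hch : ∀ p : {C : Set X // ∃ s : Fin k → S, C = cell D G s ∧ C.Nonempty},
      ∃ s : Fin k → S, p.1 = cell D G s ∧ (cell D G s).Nonempty := by
    rintro ⟨C, s, rfl, hne⟩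
    exact ⟨s, rfl, hne⟩
  choose s hs1 hs2 using hch
  refine Nat.card_le_card_of_injective
    (fun p => (⟨s p, hs2 p⟩ : {s : Fin k → S // (cell D G s).Nonempty})) ?_
  intro p q hpq
  simp only [Subtype.mk.injEq] at hpq
  apply Subtype.ext
  rw [hs1 p, hs1 q, hpq]

end CellsCount

/-- If the topological entropy `h(G)` of a partial continuous map
`(D, G)` on `X × S` (`S` finite nonempty discrete) is finite, then for every `ε > 0`
there is `N` such that for all `k ≥ N`, `|Adm_k| ≤ 2^{k(h(G)+ε)}`; consequently, the
cardinality of the `k`-th cell decomposition (the nonempty cells `C[s]`, `s ∈ S^k`)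
obeys the same bound. -/
theorem card_admissible_le_two_pow_entropy
    {X S : Type*} [TopologicalSpace X] [TopologicalSpace S] [DiscreteTopology S]
    [Fintype S] [Nonempty S]
    (D : Set (X × S)) (G : X × S → X × S) (hG : ContinuousOn G D)
    (hfin : topEntropy D G ≠ ⊤)
    (ε : ℝ) (hε : 0 < ε) :
    ∃ N : ℕ, ∀ k : ℕ, N ≤ k →
      (Nat.card {s : Fin k → S // (cell D G s).Nonempty} : ℝ)
          ≤ 2 ^ ((k : ℝ) * ((topEntropy D G).toReal + ε))
        ∧ (Nat.card {C : Set X // ∃ s : Fin k → S, C = cell D G s ∧ C.Nonempty} : ℝ)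
          ≤ 2 ^ ((k : ℝ) * ((topEntropy D G).toReal + ε)) := by
  classical
  set h : ℝ := (topEntropy D G).toReal with hh
  have hco : coverEntropy D G (statesCover X S) ≤ h :=
    coverEntropy_states_le_toReal D G hfin
  have h0 : 0 ≤ h := le_trans (coverEntropy_nonneg D G (statesCover X S)) hco
  have hε2 : 0 < ε / 2 := by linarith
  obtain ⟨k₀, hk₀1, hk₀⟩ := exists_good_k D G (statesCover X S) hco hε2
  have ha0 : 0 < h + ε / 2 := by linarith
  -- the bound at time `k₀`
  have hNk₀ : (NC D G k₀ : ℝ) ≤ 2 ^ ((k₀ : ℝ) * (h + ε / 2)) := by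
    obtain ⟨m, rfl⟩ : ∃ m, k₀ = m + 1 := ⟨k₀ - 1, by omega⟩
    exact le_trans (card_cell_le_two_pow_Hseq D G m)
      (Real.rpow_le_rpow_of_exponent_le one_le_two hk₀)
  set c : ℝ := Real.logb 2 (Nat.card S) with hcdef
  have hS1 : 1 ≤ Nat.card S := Nat.one_le_iff_ne_zero.2 Nat.card_pos.ne'
  have hc0 : 0 ≤ c := Real.logb_nonneg one_lt_two (by exact_mod_cast hS1)
  have hcard2 : ((Nat.card S : ℕ) : ℝ) = 2 ^ c :=
    (Real.rpow_logb two_pos (by norm_num) (by exact_mod_cast Nat.card_pos)).symm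
  obtain ⟨N₀, hN₀⟩ := exists_nat_ge ((k₀ : ℝ) * c / (ε / 2))
  refine ⟨max k₀ N₀, ?_⟩
  intro k hk
  have hkk₀ : k₀ ≤ k := le_trans (le_max_left _ _) hk
  have hkN₀ : (N₀ : ℝ) ≤ k := by exact_mod_cast le_trans (le_max_right _ _) hk
  have hcr : (k₀ : ℝ) * c ≤ (k : ℝ) * (ε / 2) := by
    have h1 : (k₀ : ℝ) * c / (ε / 2) ≤ k := le_trans hN₀ hkN₀
    rw [div_le_iff₀ hε2] at h1
    linarith
  set q := k / k₀ with hqdef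
  set r := k % k₀ with hrdef
  have hqr : q * k₀ + r = k := by
    rw [hqdef, hrdef, Nat.mul_comm]
    exact Nat.div_add_mod k k₀
  have hrk₀ : r ≤ k₀ := le_of_lt (Nat.mod_lt _ (by omega))
  have hNk : NC D G k ≤ NC D G k₀ ^ q * Nat.card S ^ r :=
    le_trans (le_of_eq (congrArg (NC D G) hqr.symm))
      (le_trans (NC_mul_le D G k₀ r q)
        (Nat.mul_le_mul_left _ (NC_le_pow D G r)))
  -- pass to the reals
  have hreal : (NC D G k : ℝ)
      ≤ ((2 : ℝ) ^ ((k₀ : ℝ) * (h + ε / 2))) ^ q * ((2 : ℝ) ^ c) ^ r := by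
    calc (NC D G k : ℝ)
        ≤ (NC D G k₀ : ℝ) ^ q * ((Nat.card S : ℕ) : ℝ) ^ r := by exact_mod_cast hNk
      _ ≤ ((2 : ℝ) ^ ((k₀ : ℝ) * (h + ε / 2))) ^ q * ((2 : ℝ) ^ c) ^ r := by
          rw [hcard2]
          exact mul_le_mul_of_nonneg_right
            (pow_le_pow_left₀ (Nat.cast_nonneg _) hNk₀ q) (by positivity)
  have hpow : ((2 : ℝ) ^ ((k₀ : ℝ) * (h + ε / 2))) ^ q * ((2 : ℝ) ^ c) ^ r
      = (2 : ℝ) ^ ((k₀ : ℝ) * (h + ε / 2) * q + c * r) := by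
    rw [← Real.rpow_natCast ((2 : ℝ) ^ ((k₀ : ℝ) * (h + ε / 2))) q,
      ← Real.rpow_natCast ((2 : ℝ) ^ c) r,
      ← Real.rpow_mul (by norm_num : (0:ℝ) ≤ 2),
      ← Real.rpow_mul (by norm_num : (0:ℝ) ≤ 2),
      ← Real.rpow_add (by norm_num : (0:ℝ) < 2)]
  have hexp : (k₀ : ℝ) * (h + ε / 2) * q + c * r ≤ (k : ℝ) * (h + ε) := by
    have hq : (q : ℝ) * (k₀ : ℝ) + (r : ℝ) = (k : ℝ) := by exact_mod_cast hqr
    have hr : (r : ℝ) ≤ (k₀ : ℝ) := by exact_mod_cast hrk₀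
    have h3 : c * r ≤ c * k₀ := mul_le_mul_of_nonneg_left hr hc0
    have h4 : 0 ≤ (h + ε / 2) * r := mul_nonneg ha0.le (Nat.cast_nonneg r)
    have h6 : (h + ε / 2) * ((q : ℝ) * (k₀ : ℝ) + (r : ℝ))
        = (h + ε / 2) * (k : ℝ) := by rw [hq]
    nlinarith [h3, h4, hcr, h6]
  have hmain : (NC D G k : ℝ) ≤ 2 ^ ((k : ℝ) * (h + ε)) := by
    calc (NC D G k : ℝ)
        ≤ ((2 : ℝ) ^ ((k₀ : ℝ) * (h + ε / 2))) ^ q * ((2 : ℝ) ^ c) ^ r := hreal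
      _ = (2 : ℝ) ^ ((k₀ : ℝ) * (h + ε / 2) * q + c * r) := hpow
      _ ≤ 2 ^ ((k : ℝ) * (h + ε)) :=
          Real.rpow_le_rpow_of_exponent_le one_le_two hexp
  refine ⟨hmain, le_trans ?_ hmain⟩
  exact_mod_cast Nat.cast_le.2 (card_cells_le D G k)

end
end

section
/- For every integer n ≥ 1, the polynomial X^{2^n} + Y^{2^n} − 1 is irreducible in the polynomial ring ℝ[X,Y]; consequently the ideal it generates is a prime ideal of ℝ[X,Y]. -/
open MvPolynomial

noncomputable def e1 : MvPolynomial (Fin 1) ℝ ≃ₐ[ℝ] Polynomial ℝ :=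
  (MvPolynomial.renameEquiv ℝ (Equiv.equivPUnit (Fin 1))).trans
    (MvPolynomial.pUnitAlgEquiv.{0,0} ℝ)

noncomputable def e2 : MvPolynomial (Fin 2) ℝ ≃ₐ[ℝ] Polynomial (Polynomial ℝ) :=
  (MvPolynomial.finSuccEquiv ℝ 1).trans (Polynomial.mapAlgEquiv e1)

lemma e2_X0 : e2 (X 0) = Polynomial.X := by
  simp [e2, finSuccEquiv_X_zero]

lemma e1_X0 : e1 (X 0) = Polynomial.X := by
  simp [e1]

lemma e2_X1 : e2 (X 1) = Polynomial.C Polynomial.X := by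
  show Polynomial.mapAlgEquiv e1 ((MvPolynomial.finSuccEquiv ℝ 1) (X (0 : Fin 1).succ)) = _
  rw [finSuccEquiv_X_succ]
  simp [Polynomial.mapAlgEquiv, e1_X0]

lemma not_sq_dvd (m : ℕ) (hm : m ≠ 0) :
    ¬ ((Polynomial.X - 1 : Polynomial ℝ) ^ 2 ∣ Polynomial.X ^ m - 1) := by
  rintro ⟨q, hq⟩
  have h := congrArg (fun p => Polynomial.eval 1 (Polynomial.derivative p)) hq
  simp [Polynomial.derivative_pow, Polynomial.derivative_mul, mul_comm] at h
  exact hm (by exact_mod_cast h)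

lemma gen_irred (m : ℕ) (hm : 2 ≤ m) :
    Irreducible (Polynomial.X ^ m + Polynomial.C (Polynomial.X ^ m - 1) :
      Polynomial (Polynomial ℝ)) := by
  have hm0 : m ≠ 0 := by omega
  set c : Polynomial ℝ := Polynomial.X ^ m - 1 with hc
  set P : Ideal (Polynomial ℝ) := Ideal.span {Polynomial.X - 1} with hP
  have hXprime : Prime (Polynomial.X - 1 : Polynomial ℝ) := by
    have : Irreducible (Polynomial.X - Polynomial.C (1:ℝ)) := Polynomial.irreducible_X_sub_C 1
    rw [Polynomial.C_1] at this
    exact this.prime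
  have hPprime : P.IsPrime := (Ideal.span_singleton_prime hXprime.ne_zero).mpr hXprime
  have hmonic : (Polynomial.X ^ m + Polynomial.C c).Monic :=
    Polynomial.monic_X_pow_add_C c hm0
  have hdeg : (Polynomial.X ^ m + Polynomial.C c).natDegree = m :=
    Polynomial.natDegree_X_pow_add_C
  refine Polynomial.irreducible_of_eisenstein_criterion hPprime ?_ ?_ ?_ ?_ hmonic.isPrimitive
  · rw [hmonic.leadingCoeff]
    intro h1
    exact hPprime.ne_top (Ideal.eq_top_of_isUnit_mem _ h1 isUnit_one)
  · intro i hi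
    have hi' : i < m := by
      rwa [Polynomial.degree_eq_natDegree hmonic.ne_zero, hdeg, Nat.cast_lt] at hi
    rw [Polynomial.coeff_add, Polynomial.coeff_X_pow, if_neg hi'.ne, Polynomial.coeff_C]
    split
    · rw [zero_add]
      refine Ideal.mem_span_singleton.mpr ?_
      simpa using sub_dvd_pow_sub_pow (Polynomial.X : Polynomial ℝ) 1 m
    · simp [P.zero_mem]
  · exact Polynomial.natDegree_pos_iff_degree_pos.mp (by omega)
  · rw [Polynomial.coeff_add, Polynomial.coeff_X_pow, if_neg (by omega : m ≠ 0).symm,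
      Polynomial.coeff_C, if_pos rfl, zero_add, hP, Ideal.span_singleton_pow,
      Ideal.mem_span_singleton]
    exact not_sq_dvd m hm0

/-- For every integer `n ≥ 1`, the polynomial
`X^{2^n} + Y^{2^n} − 1` is irreducible in `ℝ[X,Y]`; consequently the ideal it
generates is a prime ideal of `ℝ[X,Y]`. -/
theorem fermat_poly_irreducible (n : ℕ) (hn : 1 ≤ n) :
    Irreducible
        ((X 0) ^ (2 ^ n) + (X 1) ^ (2 ^ n) - 1 : MvPolynomial (Fin 2) ℝ) ∧
      (Ideal.span
        {((X 0) ^ (2 ^ n) + (X 1) ^ (2 ^ n) - 1 : MvPolynomial (Fin 2) ℝ)}).IsPrime := by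
  set m := 2 ^ n with hm
  have hm2 : 2 ≤ m := by
    calc 2 = 2 ^ 1 := rfl
    _ ≤ 2 ^ n := Nat.pow_le_pow_right (by norm_num) hn
  have key : Irreducible ((X 0) ^ m + (X 1) ^ m - 1 : MvPolynomial (Fin 2) ℝ) := by
    rw [← MulEquiv.irreducible_iff e2]
    have : e2 ((X 0) ^ m + (X 1) ^ m - 1 : MvPolynomial (Fin 2) ℝ)
        = Polynomial.X ^ m + Polynomial.C (Polynomial.X ^ m - 1) := by
      rw [map_sub, map_add, map_pow, map_pow, e2_X0, e2_X1, map_one, ← Polynomial.C_pow,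
        map_sub, Polynomial.C_1]
      ring
    rw [this]
    exact gen_irred m hm2
  refine ⟨key, ?_⟩
  have hprime : Prime ((X 0) ^ m + (X 1) ^ m - 1 : MvPolynomial (Fin 2) ℝ) := key.prime
  exact (Ideal.span_singleton_prime hprime.ne_zero).mpr hprime
end

section
/- Let n ≥ 1 be an integer and F ∈ ℝ[X,Y]. If the set { (x,y) ∈ ℝ² : x^{2^n} + y^{2^n} = 1 and F(x,y) = 0 } is infinite, then the polynomial X^{2^n} + Y^{2^n} − 1 divides F in ℝ[X,Y]. -/
open MvPolynomial

namespace FermatAux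

open Polynomial

noncomputable section

/-- Evaluation of a bivariate polynomial: outer variable at `x`, inner at `y`. -/
def evv (x y : ℝ) : Polynomial (Polynomial ℝ) →+* ℝ :=
  (Polynomial.evalRingHom x).comp (Polynomial.mapRingHom (Polynomial.evalRingHom y))

@[simp] lemma evv_X (x y : ℝ) : evv x y Polynomial.X = x := by
  simp [evv]

@[simp] lemma evv_C (x y : ℝ) (q : Polynomial ℝ) : evv x y (Polynomial.C q) = q.eval y := by
  simp [evv]

/-- The Fermat curve polynomial `Y^m + (X^m - 1)` in `ℝ[X][Y]`. -/
def g (m : ℕ) : Polynomial (Polynomial ℝ) :=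
  Polynomial.X ^ m + Polynomial.C (Polynomial.X ^ m - 1)

lemma monic_g (m : ℕ) (hm : m ≠ 0) : (g m).Monic :=
  Polynomial.monic_X_pow_add_C _ hm

lemma natDegree_g (m : ℕ) : (g m).natDegree = m :=
  Polynomial.natDegree_X_pow_add_C

lemma evv_g (m : ℕ) (x y : ℝ) : evv x y (g m) = x ^ m + (y ^ m - 1) := by
  simp [g]

lemma not_sq_dvd (m : ℕ) (hm : m ≠ 0) :
    ¬ ((Polynomial.X - Polynomial.C (1:ℝ)) ^ 2 ∣ (Polynomial.X ^ m - 1 : Polynomial ℝ)) := by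
  intro hdvd
  have h1 : (Polynomial.X - Polynomial.C (1:ℝ)) ^ 1 ∣
      Polynomial.derivative (Polynomial.X ^ m - 1 : Polynomial ℝ) := by
    simpa using Polynomial.pow_sub_one_dvd_derivative_of_pow_dvd hdvd
  rw [pow_one] at h1
  have h2 : Polynomial.derivative (Polynomial.X ^ m - 1 : Polynomial ℝ)
      = Polynomial.C (m : ℝ) * Polynomial.X ^ (m - 1) := by
    simp [Polynomial.derivative_X_pow]
  rw [h2, Polynomial.dvd_iff_isRoot] at h1
  simp [Polynomial.IsRoot] at h1
  exact hm (Nat.cast_eq_zero.mp h1)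

lemma irreducible_g (m : ℕ) (hm : m ≠ 0) : Irreducible (g m) := by
  set P : Ideal (Polynomial ℝ) := Ideal.span {Polynomial.X - Polynomial.C (1:ℝ)} with hP
  have hprime : P.IsPrime := by
    rw [hP, Ideal.span_singleton_prime (Polynomial.X_sub_C_ne_zero (1:ℝ))]
    exact (Polynomial.irreducible_X_sub_C (1:ℝ)).prime
  have hEis : (g m).IsEisensteinAt P := by
    apply (monic_g m hm).isEisensteinAt_of_mem_of_notMem hprime.ne_top
    · intro i hi
      rw [natDegree_g] at hi
      rcases eq_or_ne i 0 with rfl | hi0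
      · have : (g m).coeff 0 = Polynomial.X ^ m - 1 := by
          rw [g, Polynomial.coeff_add, Polynomial.coeff_X_pow, Polynomial.coeff_C,
            if_neg (Ne.symm hm), if_pos rfl, zero_add]
        rw [this, hP, Ideal.mem_span_singleton]
        simpa using sub_dvd_pow_sub_pow (Polynomial.X : Polynomial ℝ) 1 m
      · have : (g m).coeff i = 0 := by
          rw [g, Polynomial.coeff_add, Polynomial.coeff_X_pow, Polynomial.coeff_C,
            if_neg hi.ne, if_neg hi0, zero_add]
        rw [this]; exact P.zero_mem
    · have h0 : (g m).coeff 0 = Polynomial.X ^ m - 1 := by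
        rw [g, Polynomial.coeff_add, Polynomial.coeff_X_pow, Polynomial.coeff_C,
          if_neg (Ne.symm hm), if_pos rfl, zero_add]
      rw [h0, hP, Ideal.span_singleton_pow, Ideal.mem_span_singleton]
      exact not_sq_dvd m hm
  have := hEis.irreducible hprime (monic_g m hm).isPrimitive
    (by rw [natDegree_g]; exact Nat.pos_of_ne_zero hm)
  exact this

lemma irreducible_g_map (m : ℕ) (hm : m ≠ 0) :
    Irreducible ((g m).map (algebraMap (Polynomial ℝ) (FractionRing (Polynomial ℝ)))) :=
  ((monic_g m hm).irreducible_iff_irreducible_map_fraction_map).mp (irreducible_g m hm)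

lemma infinite_snd {S : Set (ℝ × ℝ)} (hS : S.Infinite)
    (hfib : ∀ y : ℝ, {x : ℝ | (x, y) ∈ S}.Finite) : (Prod.snd '' S).Infinite := by
  by_contra hfin
  rw [Set.not_infinite] at hfin
  apply hS
  have hsub : S ⊆ ⋃ y ∈ Prod.snd '' S, (fun x => (x, y)) '' {x | (x, y) ∈ S} := by
    rintro ⟨x, y⟩ hp
    exact Set.mem_biUnion ⟨(x, y), hp, rfl⟩ ⟨x, hp, rfl⟩
  exact (hfin.biUnion fun y _ => (hfib y).image _).subset hsub

/-- Key lemma in `ℝ[X][Y]` form. -/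
lemma key (m : ℕ) (hm : m ≠ 0) (f : Polynomial (Polynomial ℝ))
    (h : {p : ℝ × ℝ | p.1 ^ m + p.2 ^ m = 1 ∧ evv p.1 p.2 f = 0}.Infinite) :
    g m ∣ f := by
  set K := FractionRing (Polynomial ℝ)
  set φ := algebraMap (Polynomial ℝ) K with hφ
  by_cases hd : (g m).map φ ∣ f.map φ
  · exact (Polynomial.map_dvd_map φ (IsFractionRing.injective _ _) (monic_g m hm)).mp hd
  exfalso
  have hcop : IsCoprime ((g m).map φ) (f.map φ) :=
    (EuclideanDomain.dvd_or_coprime _ _ (irreducible_g_map m hm)).resolve_left hd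
  obtain ⟨a, b, hab⟩ := hcop
  obtain ⟨d₁, ha⟩ :=
    IsLocalization.integerNormalization_map_to_map (nonZeroDivisors (Polynomial ℝ)) a
  obtain ⟨d₂, hb⟩ :=
    IsLocalization.integerNormalization_map_to_map (nonZeroDivisors (Polynomial ℝ)) b
  set a' := IsLocalization.integerNormalization (nonZeroDivisors (Polynomial ℝ)) a with ha'
  set b' := IsLocalization.integerNormalization (nonZeroDivisors (Polynomial ℝ)) b with hb'
  set H : Polynomial (Polynomial ℝ) :=
    Polynomial.C (d₂ : Polynomial ℝ) * a' * g m + Polynomial.C (d₁ : Polynomial ℝ) * b' * f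
    with hH
  have hsa : a'.map φ = Polynomial.C (φ (d₁ : Polynomial ℝ)) * a := by
    rw [ha, ← algebraMap_smul K ((d₁ : Polynomial ℝ)) a, Polynomial.smul_eq_C_mul]
  have hsb : b'.map φ = Polynomial.C (φ (d₂ : Polynomial ℝ)) * b := by
    rw [hb, ← algebraMap_smul K ((d₂ : Polynomial ℝ)) b, Polynomial.smul_eq_C_mul]
  have hmapH : H.map φ = Polynomial.C (φ ((d₁ : Polynomial ℝ) * (d₂ : Polynomial ℝ))) := by
    rw [hH, Polynomial.map_add, Polynomial.map_mul, Polynomial.map_mul, Polynomial.map_mul,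
      Polynomial.map_mul, hsa, hsb, Polynomial.map_C, Polynomial.map_C, map_mul, Polynomial.C_mul]
    linear_combination (Polynomial.C (φ (d₁ : Polynomial ℝ)) * Polynomial.C
      (φ (d₂ : Polynomial ℝ))) * hab
  have hHC : H = Polynomial.C ((d₁ : Polynomial ℝ) * (d₂ : Polynomial ℝ)) := by
    apply Polynomial.map_injective φ (IsFractionRing.injective _ _)
    rw [hmapH, Polynomial.map_C]
  set u : Polynomial ℝ := (d₁ : Polynomial ℝ) * (d₂ : Polynomial ℝ) with hu
  have hu0 : u ≠ 0 :=
    mul_ne_zero (nonZeroDivisors.ne_zero d₁.2) (nonZeroDivisors.ne_zero d₂.2)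
  -- every second coordinate of a point of the set is a root of u
  have hroot : ∀ p : ℝ × ℝ, p ∈ {p : ℝ × ℝ | p.1 ^ m + p.2 ^ m = 1 ∧ evv p.1 p.2 f = 0} →
      u.IsRoot p.2 := by
    rintro ⟨x, y⟩ ⟨h1, h2⟩
    have hg0 : evv x y (g m) = 0 := by rw [evv_g]; dsimp at h1; linarith
    have := congrArg (evv x y) hHC
    rw [hH] at this
    simp only [map_add, map_mul, hg0, h2, mul_zero, zero_add, add_zero, evv_C] at this
    exact this.symm
  have hfib : ∀ y : ℝ, {x : ℝ | (x, y) ∈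
      {p : ℝ × ℝ | p.1 ^ m + p.2 ^ m = 1 ∧ evv p.1 p.2 f = 0}}.Finite := by
    intro y
    have hq : (Polynomial.X ^ m + Polynomial.C (y ^ m - 1) : Polynomial ℝ) ≠ 0 :=
      (Polynomial.monic_X_pow_add_C _ hm).ne_zero
    apply (Polynomial.finite_setOf_isRoot hq).subset
    rintro x ⟨h1, -⟩
    simp only [Set.mem_setOf_eq, Polynomial.IsRoot, Polynomial.eval_add, Polynomial.eval_pow,
      Polynomial.eval_X, Polynomial.eval_C]
    dsimp at h1
    linarith
  have hinf : (Prod.snd '' {p : ℝ × ℝ | p.1 ^ m + p.2 ^ m = 1 ∧ evv p.1 p.2 f = 0}).Infinite :=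
    infinite_snd h hfib
  have : u = 0 := by
    apply Polynomial.eq_zero_of_infinite_isRoot
    apply hinf.mono
    rintro y ⟨p, hp, rfl⟩
    exact hroot p hp
  exact hu0 this

/-- The algebra equivalence `ℝ[X_0, X_1] ≃ ℝ[X][Y]`. -/
def e₁ : MvPolynomial (Fin 1) ℝ ≃ₐ[ℝ] Polynomial ℝ :=
  (MvPolynomial.renameEquiv ℝ (Equiv.equivPUnit (Fin 1) : Fin 1 ≃ Unit)).trans (MvPolynomial.pUnitAlgEquiv ℝ)

def e : MvPolynomial (Fin 2) ℝ ≃ₐ[ℝ] Polynomial (Polynomial ℝ) :=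
  (MvPolynomial.finSuccEquiv ℝ 1).trans (Polynomial.mapAlgEquiv e₁)

lemma e₁_X (i : Fin 1) : e₁ (X i) = Polynomial.X := by
  simp [e₁]

lemma e_X0 : e (X (0 : Fin 2)) = Polynomial.X := by
  simp [e, MvPolynomial.finSuccEquiv_X_zero, Polynomial.coe_mapAlgEquiv]

lemma e_X1 : e (X (1 : Fin 2)) = Polynomial.C Polynomial.X := by
  have h1 : (X (1 : Fin 2) : MvPolynomial (Fin 2) ℝ) = X (Fin.succ 0) := rfl
  simp [e, h1, MvPolynomial.finSuccEquiv_X_succ, Polynomial.coe_mapAlgEquiv, e₁_X]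

lemma evv_e (x y : ℝ) (q : MvPolynomial (Fin 2) ℝ) :
    evv x y (e q) = MvPolynomial.eval ![x, y] q := by
  have hcomp : (evv x y).comp (e.toAlgHom.toRingHom)
      = (MvPolynomial.eval ![x, y] : MvPolynomial (Fin 2) ℝ →+* ℝ) := by
    apply MvPolynomial.ringHom_ext
    · intro r
      have : e (MvPolynomial.C r) = algebraMap ℝ (Polynomial (Polynomial ℝ)) r := by
        rw [← MvPolynomial.algebraMap_eq]; exact e.commutes r
      simp only [RingHom.comp_apply, AlgEquiv.toAlgHom_eq_coe, AlgHom.toRingHom_eq_coe,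
        RingHom.coe_coe, AlgHom.coe_coe, this]
      simp [Polynomial.algebraMap_apply]
    · intro i
      fin_cases i
      · show (evv x y) (e (X (0 : Fin 2))) = (MvPolynomial.eval ![x, y]) (X (0 : Fin 2))
        rw [e_X0]
        simp
      · show (evv x y) (e (X (1 : Fin 2))) = (MvPolynomial.eval ![x, y]) (X (1 : Fin 2))
        rw [e_X1]
        simp
  exact DFunLike.congr_fun hcomp q

lemma e_G (m : ℕ) :
    e ((X 0) ^ m + (X 1) ^ m - 1 : MvPolynomial (Fin 2) ℝ) = g m := by
  rw [map_sub, map_add, map_pow, map_pow, map_one, e_X0, e_X1, g, ← Polynomial.C_pow]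
  rw [map_sub, Polynomial.C_1]
  ring

end

end FermatAux

open FermatAux in
/-- Let `n ≥ 1` and `F ∈ ℝ[X,Y]`. If the set
`{(x,y) ∈ ℝ² : x^{2^n} + y^{2^n} = 1 ∧ F(x,y) = 0}` is infinite, then
`X^{2^n} + Y^{2^n} − 1` divides `F` in `ℝ[X,Y]`. -/
theorem fermat_dvd_of_infinite_zeros (n : ℕ) (hn : 1 ≤ n)
    (F : MvPolynomial (Fin 2) ℝ)
    (h : {p : ℝ × ℝ | p.1 ^ (2 ^ n) + p.2 ^ (2 ^ n) = 1 ∧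
        MvPolynomial.eval ![p.1, p.2] F = 0}.Infinite) :
    ((X 0) ^ (2 ^ n) + (X 1) ^ (2 ^ n) - 1 : MvPolynomial (Fin 2) ℝ) ∣ F := by
  set m := 2 ^ n with hmdef
  have hm : m ≠ 0 := pow_ne_zero n two_ne_zero
  have hset : {p : ℝ × ℝ | p.1 ^ m + p.2 ^ m = 1 ∧ evv p.1 p.2 (e F) = 0}
      = {p : ℝ × ℝ | p.1 ^ m + p.2 ^ m = 1 ∧ MvPolynomial.eval ![p.1, p.2] F = 0} := by
    ext p
    simp [evv_e]
  have hkey : g m ∣ e F := key m hm (e F) (by rw [hset]; exact h)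
  have := map_dvd (e.symm : Polynomial (Polynomial ℝ) ≃ₐ[ℝ] MvPolynomial (Fin 2) ℝ) hkey
  rw [← e_G m, AlgEquiv.symm_apply_apply, AlgEquiv.symm_apply_apply] at this
  exact this
end

section
/- Let n ≥ 1 be an integer and F ∈ ℝ[X,Y] a polynomial of total degree strictly less than 2^n. If F(x,y) = 0 for every (x,y) ∈ ℝ² with x^{2^n} + y^{2^n} = 1, then F = 0. -/
open Polynomial

/-- The embedding of `ℝ[X₀,X₁]` into `ℝ[X][Y]`, sending `X₀ ↦ C X` and `X₁ ↦ X` (the outer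
variable). -/
noncomputable def fermatPhi : MvPolynomial (Fin 2) ℝ →+* Polynomial (Polynomial ℝ) :=
  MvPolynomial.eval₂Hom (Polynomial.C.comp Polynomial.C) ![Polynomial.C Polynomial.X, Polynomial.X]

/-- A left inverse of `fermatPhi`. -/
noncomputable def fermatPsi : Polynomial (Polynomial ℝ) →+* MvPolynomial (Fin 2) ℝ :=
  Polynomial.eval₂RingHom
    (Polynomial.eval₂RingHom (MvPolynomial.C) (MvPolynomial.X 0)) (MvPolynomial.X 1)

lemma fermatPsi_phi (F : MvPolynomial (Fin 2) ℝ) : fermatPsi (fermatPhi F) = F := by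
  have h : fermatPsi.comp fermatPhi = RingHom.id _ := by
    apply MvPolynomial.ringHom_ext
    · intro r
      simp [fermatPhi, fermatPsi]
    · intro i
      fin_cases i <;> simp [fermatPhi, fermatPsi]
  calc fermatPsi (fermatPhi F) = (fermatPsi.comp fermatPhi) F := rfl
    _ = F := by rw [h]; rfl

lemma fermatPhi_eval (x y : ℝ) (F : MvPolynomial (Fin 2) ℝ) :
    Polynomial.eval y ((fermatPhi F).map (Polynomial.evalRingHom x))
      = MvPolynomial.eval ![x, y] F := by
  have h : ((Polynomial.evalRingHom y).comp
      ((Polynomial.mapRingHom (Polynomial.evalRingHom x)).comp fermatPhi))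
      = (MvPolynomial.eval ![x, y]) := by
    apply MvPolynomial.ringHom_ext
    · intro r
      simp [fermatPhi]
    · intro i
      fin_cases i <;> simp [fermatPhi]
  calc Polynomial.eval y ((fermatPhi F).map (Polynomial.evalRingHom x))
      = ((Polynomial.evalRingHom y).comp
        ((Polynomial.mapRingHom (Polynomial.evalRingHom x)).comp fermatPhi)) F := rfl
    _ = MvPolynomial.eval ![x, y] F := by rw [h]

lemma fermatPhi_natDegree_le (F : MvPolynomial (Fin 2) ℝ) :
    (fermatPhi F).natDegree ≤ F.totalDegree := by
  have h : fermatPhi F = ∑ d ∈ F.support,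
      (Polynomial.C (Polynomial.C (MvPolynomial.coeff d F))) *
        ((Polynomial.C Polynomial.X) ^ (d 0) * Polynomial.X ^ (d 1)) := by
    show MvPolynomial.eval₂ _ _ F = _
    rw [MvPolynomial.eval₂_eq']
    refine Finset.sum_congr rfl fun d _ => ?_
    rw [Fin.prod_univ_two]
    simp
  rw [h]
  apply Polynomial.natDegree_sum_le_of_forall_le
  intro d hd
  have h1 : d 1 ≤ F.totalDegree := by
    have h2 := MvPolynomial.le_totalDegree hd
    have hsum : d.sum (fun _ e => e) = d 0 + d 1 := by
      rw [Finsupp.sum_fintype _ _ (fun _ => rfl), Fin.sum_univ_two]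
    omega
  refine Polynomial.natDegree_mul_le.trans ?_
  rw [Polynomial.natDegree_C, zero_add]
  refine Polynomial.natDegree_mul_le.trans ?_
  rw [← Polynomial.C_pow, Polynomial.natDegree_C, zero_add, Polynomial.natDegree_X_pow]
  exact h1

/-- Let `n ≥ 1` and `F ∈ ℝ[X,Y]` of total degree strictly less
than `2^n`. If `F(x,y) = 0` for every `(x,y) ∈ ℝ²` with `x^{2^n} + y^{2^n} = 1`,
then `F = 0`. -/
theorem eq_zero_of_vanishes_on_fermat (n : ℕ) (hn : 1 ≤ n)
    (F : MvPolynomial (Fin 2) ℝ) (hdeg : F.totalDegree < 2 ^ n)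
    (hvan : ∀ x y : ℝ, x ^ (2 ^ n) + y ^ (2 ^ n) = 1 →
      MvPolynomial.eval ![x, y] F = 0) :
    F = 0 := by
  by_contra hF0
  set m : ℕ := 2 ^ n with hm_def
  have hm : m ≠ 0 := by positivity
  -- the fraction field of ℝ[X]
  set K := FractionRing (Polynomial ℝ) with hK
  set θ : Polynomial ℝ →+* K := algebraMap (Polynomial ℝ) K with hθ
  have hinj : Function.Injective θ := IsFractionRing.injective _ _
  have hinjP : Function.Injective (Polynomial.map θ) := Polynomial.map_injective θ hinj
  -- the Fermat polynomial, viewed in ℝ[X][Y]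
  set c : Polynomial ℝ := 1 - Polynomial.X ^ m with hc
  set p₀ : Polynomial (Polynomial ℝ) := Polynomial.X ^ m - Polynomial.C c with hp₀
  have hmonic : p₀.Monic := monic_X_pow_sub_C c hm
  -- Eisenstein at (X - 1): p₀ is irreducible over ℝ[X]
  have hC1 : (Polynomial.C (1:ℝ)) = 1 := Polynomial.C_1
  have hdvd_geom : ∀ q : Polynomial ℝ,
      ((Polynomial.X - Polynomial.C (1:ℝ)) * q ∣ Polynomial.X ^ m - Polynomial.C (1:ℝ)) →
      (q ∣ ∑ i ∈ Finset.range m, Polynomial.X ^ i) := by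
    intro q hq
    have hgeom : (∑ i ∈ Finset.range m, (Polynomial.X : Polynomial ℝ) ^ i) *
        (Polynomial.X - Polynomial.C (1:ℝ)) = Polynomial.X ^ m - Polynomial.C (1:ℝ) := by
      simpa [hC1] using geom_sum_mul (Polynomial.X : Polynomial ℝ) m
    rw [← hgeom, mul_comm (Polynomial.X - Polynomial.C (1:ℝ)) q] at hq
    exact (mul_dvd_mul_iff_left (Polynomial.X_sub_C_ne_zero (1:ℝ))).mp
      (by rwa [mul_comm q _, mul_comm _ (Polynomial.X - Polynomial.C (1:ℝ))] at hq)
  have hgeom_eval : Polynomial.eval (1:ℝ) (∑ i ∈ Finset.range m, (Polynomial.X : Polynomial ℝ) ^ i)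
      = (m : ℝ) := by
    simp [Polynomial.eval_finset_sum]
  have hirr₀ : Irreducible p₀ := by
    apply Polynomial.irreducible_of_eisenstein_criterion
      (P := Ideal.span {Polynomial.X - Polynomial.C (1:ℝ)})
    · exact (Ideal.span_singleton_prime (Polynomial.X_sub_C_ne_zero (1:ℝ))).mpr
        (Polynomial.prime_X_sub_C 1)
    · rw [hmonic.leadingCoeff, Ideal.mem_span_singleton]
      intro h
      exact Polynomial.not_isUnit_X_sub_C (1:ℝ) (isUnit_of_dvd_one h)
    · intro k hk
      rw [hp₀, Polynomial.degree_X_pow_sub_C (Nat.pos_of_ne_zero hm)] at hk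
      have hkm : k < m := by exact_mod_cast hk
      rw [hp₀, Polynomial.coeff_sub, Polynomial.coeff_X_pow, Polynomial.coeff_C,
        if_neg hkm.ne]
      by_cases hk0 : k = 0
      · rw [if_pos hk0, Ideal.mem_span_singleton, hc]
        have : (0:ℝ[X]) - (1 - Polynomial.X ^ m) = Polynomial.X ^ m - Polynomial.C 1 := by
          rw [hC1]; ring
        rw [this]
        exact Polynomial.dvd_iff_isRoot.mpr (by simp [Polynomial.IsRoot])
      · rw [if_neg hk0, sub_zero]
        exact Ideal.zero_mem _
    · rw [hp₀, Polynomial.degree_X_pow_sub_C (Nat.pos_of_ne_zero hm)]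
      exact_mod_cast Nat.pos_of_ne_zero hm
    · rw [hp₀, Polynomial.coeff_sub, Polynomial.coeff_X_pow,
        if_neg (Nat.pos_of_ne_zero hm).ne, Polynomial.coeff_C, if_pos rfl,
        Ideal.span_singleton_pow, Ideal.mem_span_singleton, hc]
      intro h
      have h' : (Polynomial.X - Polynomial.C (1:ℝ)) * (Polynomial.X - Polynomial.C (1:ℝ)) ∣
          Polynomial.X ^ m - Polynomial.C (1:ℝ) := by
        have : (0:ℝ[X]) - (1 - Polynomial.X ^ m) = Polynomial.X ^ m - Polynomial.C 1 := by
          rw [hC1]; ring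
        rw [← this, ← sq]
        exact h
      have := hdvd_geom _ h'
      have hroot := Polynomial.dvd_iff_isRoot.mp this
      rw [Polynomial.IsRoot, hgeom_eval] at hroot
      exact (Nat.cast_ne_zero (R := ℝ)).mpr hm hroot
    · exact hmonic.isPrimitive
  -- irreducible over the fraction field
  have hirr : Irreducible (p₀.map θ) :=
    (hmonic.irreducible_iff_irreducible_map_fraction_map (K := K)).mp hirr₀
  -- F as an element of ℝ[X][Y]
  set F₀ : Polynomial (Polynomial ℝ) := fermatPhi F with hF₀def
  have hF₀ : F₀ ≠ 0 := by
    intro h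
    apply hF0
    have h2 := fermatPsi_phi F
    rw [← hF₀def, h, map_zero] at h2
    exact h2.symm
  have hdegF₀ : F₀.natDegree < m := lt_of_le_of_lt (fermatPhi_natDegree_le F) hdeg
  have hFbar : F₀.map θ ≠ 0 := fun h => hF₀ (hinjP (by simpa using h))
  -- coprimality over the fraction field
  have hndvd : ¬ (p₀.map θ ∣ F₀.map θ) := by
    intro hdvd
    have h1 := Polynomial.natDegree_le_of_dvd hdvd hFbar
    have h2 : (p₀.map θ).natDegree = m := by
      rw [hp₀, Polynomial.map_sub, Polynomial.map_pow, Polynomial.map_X, Polynomial.map_C,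
        Polynomial.natDegree_X_pow_sub_C]
    have h3 : (F₀.map θ).natDegree = F₀.natDegree :=
      Polynomial.natDegree_map_eq_of_injective hinj F₀
    omega
  have hcop : IsCoprime (p₀.map θ) (F₀.map θ) := (hirr.coprime_iff_not_dvd).mpr hndvd
  obtain ⟨A, B, hAB⟩ := hcop
  -- clear denominators
  obtain ⟨dA, hdA⟩ :=
    IsLocalization.integerNormalization_map_to_map (nonZeroDivisors (Polynomial ℝ)) A
  obtain ⟨dB, hdB⟩ :=
    IsLocalization.integerNormalization_map_to_map (nonZeroDivisors (Polynomial ℝ)) B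
  set A' := IsLocalization.integerNormalization (nonZeroDivisors (Polynomial ℝ)) A with hA'
  set B' := IsLocalization.integerNormalization (nonZeroDivisors (Polynomial ℝ)) B with hB'
  have hdA' : A'.map θ = Polynomial.C (θ (dA : Polynomial ℝ)) * A := by
    rw [hdA, ← algebraMap_smul K ((dA : Polynomial ℝ)) A, Polynomial.smul_eq_C_mul]
  have hdB' : B'.map θ = Polynomial.C (θ (dB : Polynomial ℝ)) * B := by
    rw [hdB, ← algebraMap_smul K ((dB : Polynomial ℝ)) B, Polynomial.smul_eq_C_mul]
  -- the key Bézout identity over ℝ[X][Y]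
  have key : Polynomial.C (dB : Polynomial ℝ) * (A' * p₀)
      + Polynomial.C (dA : Polynomial ℝ) * (B' * F₀)
      = Polynomial.C ((dA : Polynomial ℝ) * (dB : Polynomial ℝ)) := by
    apply hinjP
    rw [Polynomial.map_add, Polynomial.map_mul, Polynomial.map_mul, Polynomial.map_mul,
      Polynomial.map_mul, Polynomial.map_C, Polynomial.map_C, Polynomial.map_C,
      hdA', hdB', map_mul θ, Polynomial.C_mul]
    linear_combination (Polynomial.C (θ (dA : Polynomial ℝ)) *
      Polynomial.C (θ (dB : Polynomial ℝ))) * hAB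
  -- evaluation on the Fermat curve kills p₀ and F₀
  have hroot : ∀ x ∈ Set.Ioo (0:ℝ) 1,
      ((dA : Polynomial ℝ) * (dB : Polynomial ℝ)).IsRoot x := by
    rintro x ⟨hx0, hx1⟩
    set y : ℝ := (1 - x ^ m) ^ ((m : ℝ)⁻¹) with hy_def
    have hxm : x ^ m < 1 := pow_lt_one₀ hx0.le hx1 hm
    have hym : y ^ m = 1 - x ^ m := Real.rpow_inv_natCast_pow (by linarith) hm
    have hcurve : x ^ m + y ^ m = 1 := by rw [hym]; ring
    have hevF : MvPolynomial.eval ![x, y] F = 0 := hvan x y hcurve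
    set ev : Polynomial (Polynomial ℝ) →+* ℝ :=
      (Polynomial.evalRingHom y).comp (Polynomial.mapRingHom (Polynomial.evalRingHom x)) with hev
    have evC : ∀ q : Polynomial ℝ, ev (Polynomial.C q) = q.eval x := by
      intro q; simp [hev]
    have evX : ev Polynomial.X = y := by simp [hev]
    have e1 : ev p₀ = 0 := by
      rw [hp₀, map_sub, map_pow, evX, evC, hc]
      simp only [Polynomial.eval_sub, Polynomial.eval_one, Polynomial.eval_pow,
        Polynomial.eval_X]
      rw [hym]
      ring
    have e2 : ev F₀ = 0 := by
      have : ev F₀ = Polynomial.eval y ((fermatPhi F).map (Polynomial.evalRingHom x)) := by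
        simp [hev, hF₀def]
      rw [this, fermatPhi_eval, hevF]
    have hkey := congrArg ev key
    rw [map_add, map_mul, map_mul, map_mul, map_mul, e1, e2, evC, evC, evC] at hkey
    simp only [mul_zero, zero_add, add_zero] at hkey
    simpa [Polynomial.IsRoot] using hkey.symm
  have hzero : ((dA : Polynomial ℝ) * (dB : Polynomial ℝ)) = 0 := by
    apply Polynomial.eq_zero_of_infinite_isRoot
    apply Set.Infinite.mono (fun x hx => hroot x hx)
    exact Set.Ioo_infinite (by norm_num)
  exact absurd hzero (mul_ne_zero (nonZeroDivisors.coe_ne_zero dA)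
    (nonZeroDivisors.coe_ne_zero dB))
end
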